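/- The map Φ₁ sending f to the function x ↦ log f'(x) − log f'(0) is a bijection from the group Diff¹₊(I) of orientation-preserving C¹ diffeomorphisms of I = [0,1] onto the space C[0,1]^# = {F ∈ C[0,1] : F(0) = 0}, with inverse F ↦ (x ↦ (∫₀ˣ exp(F(t)) dt)/(∫₀¹ exp(F(t)) dt)). -/

import Mathlib

/-- `f` is an orientation-preserving `C¹` diffeomorphism of `I = [0,1]`. -/
def IsC1DiffeoI (f : ℝ → ℝ) : Prop :=
  ContDiffOn ℝ 1 f (Set.Icc 0 1) ∧ f 0 = 0 ∧ f 1 = 1 ∧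
    Set.BijOn f (Set.Icc (0:ℝ) 1) (Set.Icc (0:ℝ) 1) ∧
    ∀ x ∈ Set.Icc (0:ℝ) 1, 0 < derivWithin f (Set.Icc 0 1) x

/-- `Φ₁(f) = log f' − log f'(0)`. -/
noncomputable def Phi1 (f : ℝ → ℝ) : ℝ → ℝ := fun x =>
  Real.log (derivWithin f (Set.Icc 0 1) x) - Real.log (derivWithin f (Set.Icc 0 1) 0)

/-!
Since `f' = f'(0) · exp (Φ₁ f)` on `[0,1]`, integrating from `0` gives `f x = f'(0) ∫₀ˣ exp (Φ₁ f)`,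
and `f 1 = 1` fixes `f'(0)`. Hence `Ψ₁ (Φ₁ f) = f` for `Ψ₁ F x = (∫₀ˣ exp F) / (∫₀¹ exp F)`, which
gives injectivity. Conversely, for continuous `F` the map `Ψ₁ F` has the positive continuous
derivative `exp F / ∫₀¹ exp F`, so it lies in `Diff¹₊(I)`, and `Φ₁ (Ψ₁ F) = F - F 0`.
A function continuous on `[0,1]` is first extended continuously to `ℝ`.
-/

open Set

noncomputable def Psi1 (F : ℝ → ℝ) : ℝ → ℝ := fun x =>
  (∫ t in (0:ℝ)..x, Real.exp (F t)) / ∫ t in (0:ℝ)..1, Real.exp (F t)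

lemma integral_derivWithin_Icc_of_mem {f : ℝ → ℝ} {a b x : ℝ} (hab : a < b)
    (hf : ContDiffOn ℝ 1 f (Icc a b)) (hx : x ∈ Icc a b) :
    ∫ t in a..x, derivWithin f (Icc a b) t = f x - f a := by
  have hsub : Icc a x ⊆ Icc a b := Icc_subset_Icc_right hx.2
  have hcont : ContinuousOn (derivWithin f (Icc a b)) (Icc a b) :=
    hf.continuousOn_derivWithin (uniqueDiffOn_Icc hab) le_rfl
  refine intervalIntegral.integral_eq_sub_of_hasDeriv_right_of_le hx.1
    (hf.continuousOn.mono hsub) (fun t ht => ?_)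
    ((hcont.mono (by rwa [uIcc_of_le hx.1])).intervalIntegrable)
  have hmem : Icc a b ∈ nhds t := Icc_mem_nhds ht.1 (ht.2.trans_le hx.2)
  have hd : DifferentiableAt ℝ f t :=
    ((hf.differentiableOn one_ne_zero) t (hsub (Ioo_subset_Icc_self ht))).differentiableAt hmem
  rw [derivWithin_of_mem_nhds hmem]
  exact hd.hasDerivAt.hasDerivWithinAt

lemma derivWithin_eq_mul_exp_phi1 {f : ℝ → ℝ} (hf : IsC1DiffeoI f) {x : ℝ}
    (hx : x ∈ Icc (0:ℝ) 1) :
    derivWithin f (Icc 0 1) x = derivWithin f (Icc 0 1) 0 * Real.exp (Phi1 f x) := by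
  have hpos := hf.2.2.2.2
  rw [Phi1, Real.exp_sub, Real.exp_log (hpos x hx), Real.exp_log (hpos 0 (by simp))]
  field_simp [(hpos 0 (by simp)).ne']

lemma integral_exp_phi1 {f : ℝ → ℝ} (hf : IsC1DiffeoI f) {x : ℝ} (hx : x ∈ Icc (0:ℝ) 1) :
    ∫ t in (0:ℝ)..x, Real.exp (Phi1 f t) = f x / derivWithin f (Icc 0 1) 0 := by
  have hd0 := (hf.2.2.2.2 0 (by simp)).ne'
  calc ∫ t in (0:ℝ)..x, Real.exp (Phi1 f t)
      = ∫ t in (0:ℝ)..x, derivWithin f (Icc 0 1) t / derivWithin f (Icc 0 1) 0 := by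
        refine intervalIntegral.integral_congr fun t ht => ?_
        rw [uIcc_of_le hx.1] at ht
        rw [derivWithin_eq_mul_exp_phi1 hf (Icc_subset_Icc_right hx.2 ht)]
        field_simp
    _ = f x / derivWithin f (Icc 0 1) 0 := by
        rw [intervalIntegral.integral_div, integral_derivWithin_Icc_of_mem one_pos hf.1 hx,
          hf.2.1, sub_zero]

lemma psi1_phi1 {f : ℝ → ℝ} (hf : IsC1DiffeoI f) {x : ℝ} (hx : x ∈ Icc (0:ℝ) 1) :
    Psi1 (Phi1 f) x = f x := by
  have hd0 := (hf.2.2.2.2 0 (by simp)).ne'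
  rw [Psi1, integral_exp_phi1 hf hx, integral_exp_phi1 hf (by simp), hf.2.2.1]
  field_simp

lemma continuousOn_phi1 {f : ℝ → ℝ} (hf : IsC1DiffeoI f) : ContinuousOn (Phi1 f) (Icc 0 1) :=
  ((hf.1.continuousOn_derivWithin (uniqueDiffOn_Icc one_pos) le_rfl).log
    fun x hx => (hf.2.2.2.2 x hx).ne').sub continuousOn_const

lemma isC1DiffeoI_of_hasDerivAt {f f' : ℝ → ℝ}
    (hf : ∀ x ∈ Icc (0:ℝ) 1, HasDerivAt f (f' x) x) (hf' : ContinuousOn f' (Icc 0 1))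
    (hpos : ∀ x ∈ Icc (0:ℝ) 1, 0 < f' x) (h0 : f 0 = 0) (h1 : f 1 = 1) : IsC1DiffeoI f := by
  have hderiv : EqOn (derivWithin f (Icc 0 1)) f' (Icc 0 1) := fun x hx =>
    (hf x hx).hasDerivWithinAt.derivWithin (uniqueDiffOn_Icc one_pos x hx)
  have hcont : ContinuousOn f (Icc 0 1) := fun x hx => (hf x hx).continuousAt.continuousWithinAt
  have hmono : StrictMonoOn f (Icc 0 1) := strictMonoOn_of_deriv_pos (convex_Icc 0 1) hcont
    fun x hx => by
      rw [interior_Icc] at hx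
      rw [(hf x (Ioo_subset_Icc_self hx)).deriv]
      exact hpos x (Ioo_subset_Icc_self hx)
  have hmaps : MapsTo f (Icc 0 1) (Icc 0 1) := fun x hx => by
    rw [← h0, ← h1]
    exact ⟨hmono.monotoneOn (by simp) hx hx.1, hmono.monotoneOn hx (by simp) hx.2⟩
  have hsurj : SurjOn f (Icc 0 1) (Icc 0 1) := by
    simpa only [SurjOn, h0, h1] using intermediate_value_Icc zero_le_one hcont
  refine ⟨?_, h0, h1, ⟨hmaps, hmono.injOn, hsurj⟩, fun x hx => hderiv hx ▸ hpos x hx⟩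
  rw [contDiffOn_one_iff_derivWithin (uniqueDiffOn_Icc one_pos)]
  exact ⟨fun x hx => (hf x hx).differentiableAt.differentiableWithinAt, hf'.congr hderiv⟩

lemma integral_exp_pos {F : ℝ → ℝ} (hF : Continuous F) : 0 < ∫ t in (0:ℝ)..1, Real.exp (F t) :=
  intervalIntegral.intervalIntegral_pos_of_pos
    ((Real.continuous_exp.comp hF).intervalIntegrable 0 1) (fun _ => Real.exp_pos _) one_pos

lemma hasDerivAt_psi1 {F : ℝ → ℝ} (hF : Continuous F) (x : ℝ) :
    HasDerivAt (Psi1 F) (Real.exp (F x) / ∫ t in (0:ℝ)..1, Real.exp (F t)) x :=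
  (intervalIntegral.integral_hasDerivAt_right
    ((Real.continuous_exp.comp hF).intervalIntegrable 0 x)
    (Real.continuous_exp.comp hF).stronglyMeasurable.stronglyMeasurableAtFilter
    (Real.continuous_exp.comp hF).continuousAt).div_const _

lemma isC1DiffeoI_psi1 {F : ℝ → ℝ} (hF : Continuous F) : IsC1DiffeoI (Psi1 F) :=
  isC1DiffeoI_of_hasDerivAt (fun x _ => hasDerivAt_psi1 hF x)
    ((Real.continuous_exp.comp hF).div_const _).continuousOn
    (fun x _ => div_pos (Real.exp_pos _) (integral_exp_pos hF))
    (by simp [Psi1]) (div_self (integral_exp_pos hF).ne')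

lemma phi1_psi1 {F : ℝ → ℝ} (hF : Continuous F) {x : ℝ} (hx : x ∈ Icc (0:ℝ) 1) :
    Phi1 (Psi1 F) x = F x - F 0 := by
  have hderiv : ∀ y ∈ Icc (0:ℝ) 1, derivWithin (Psi1 F) (Icc 0 1) y =
      Real.exp (F y) / ∫ t in (0:ℝ)..1, Real.exp (F t) := fun y hy =>
    (hasDerivAt_psi1 hF y).hasDerivWithinAt.derivWithin (uniqueDiffOn_Icc one_pos y hy)
  have hc := (integral_exp_pos hF).ne'
  rw [Phi1, hderiv x hx, hderiv 0 (by simp), Real.log_div (Real.exp_pos _).ne' hc,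
    Real.log_div (Real.exp_pos _).ne' hc, Real.log_exp, Real.log_exp]
  ring

lemma psi1_congr {F G : ℝ → ℝ} (h : EqOn F G (Icc 0 1)) {x : ℝ} (hx : x ∈ Icc (0:ℝ) 1) :
    Psi1 F x = Psi1 G x := by
  have hint : ∀ y ∈ Icc (0:ℝ) 1,
      ∫ t in (0:ℝ)..y, Real.exp (F t) = ∫ t in (0:ℝ)..y, Real.exp (G t) := fun y hy =>
    intervalIntegral.integral_congr fun t ht => by
      rw [uIcc_of_le hy.1] at ht
      rw [h (Icc_subset_Icc_right hy.2 ht)]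
  rw [Psi1, Psi1, hint x hx, hint 1 (by simp)]

lemma ContinuousOn.exists_continuous_eqOn_Icc {F : ℝ → ℝ} {a b : ℝ} (hab : a ≤ b)
    (hF : ContinuousOn F (Icc a b)) : ∃ G : ℝ → ℝ, Continuous G ∧ EqOn G F (Icc a b) :=
  ⟨IccExtend hab ((Icc a b).domRestrict F), continuous_IccExtend_iff.mpr hF.domRestrict,
    fun _ hx => IccExtend_of_mem hab _ hx⟩

/-- `Φ₁` is a bijection from `Diff¹₊(I)` onto `C[0,1]^# = {F ∈ C[0,1] : F 0 = 0}`,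
with inverse `F ↦ (x ↦ (∫₀ˣ exp(F t) dt) / (∫₀¹ exp(F t) dt))`. -/
theorem stmt_3 :
    -- `Φ₁` takes values in `C[0,1]^#`
    (∀ f : ℝ → ℝ, IsC1DiffeoI f →
        ContinuousOn (Phi1 f) (Set.Icc 0 1) ∧ Phi1 f 0 = 0) ∧
    -- injectivity (as maps on `[0,1]`)
    (∀ f g : ℝ → ℝ, IsC1DiffeoI f → IsC1DiffeoI g →
        (∀ x ∈ Set.Icc (0:ℝ) 1, Phi1 f x = Phi1 g x) →
        ∀ x ∈ Set.Icc (0:ℝ) 1, f x = g x) ∧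
    -- surjectivity, with the stated inverse formula
    (∀ F : ℝ → ℝ, ContinuousOn F (Set.Icc 0 1) → F 0 = 0 →
        ∃ f : ℝ → ℝ, IsC1DiffeoI f ∧
          (∀ x ∈ Set.Icc (0:ℝ) 1, Phi1 f x = F x) ∧
          (∀ x ∈ Set.Icc (0:ℝ) 1,
            f x = (∫ t in (0:ℝ)..x, Real.exp (F t)) /
                  (∫ t in (0:ℝ)..(1:ℝ), Real.exp (F t)))) := by
  refine ⟨fun f hf => ⟨continuousOn_phi1 hf, sub_self _⟩, ?_, ?_⟩
  · intro f g hf hg hfg x hx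
    rw [← psi1_phi1 hf hx, ← psi1_phi1 hg hx, psi1_congr hfg hx]
  · intro F hF hF0
    obtain ⟨G, hG, hGF⟩ := hF.exists_continuous_eqOn_Icc zero_le_one
    refine ⟨Psi1 G, isC1DiffeoI_psi1 hG, fun x hx => ?_, fun x hx => psi1_congr hGF hx⟩
    rw [phi1_psi1 hG hx, hGF hx, hGF (by simp), hF0, sub_zero]
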